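/- arXiv:2206.12777 — 3 statements merged into one kernel-verified Lean document; each statement's English description precedes it below -/
import Mathlib

section
/- If uv is a bridge of a mixed multigraph M (an edge whose removal disconnects its component), then the mixed multigraph obtained from M by changing the orientation status of uv (reversing it, orienting it, or making it undirected) has the same spectrum as M. -/
open Complex Finset

noncomputable section

/-- The primitive sixth root of unity `ω = 1/2 + (√3/2)i`. -/
def omega6 : ℂ := ⟨1/2, Real.sqrt 3 / 2⟩

/-- A loopless undirected multigraph with vertex type `V` and edge type `E`:
each edge has a pair of distinct endpoints. -/
structure Multigraph (V E : Type) where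
  ends : E → Sym2 V
  loopless : ∀ e, ¬ (ends e).IsDiag

variable {V E : Type}

/-- A mixed multigraph with underlying multigraph `G`: each edge is either
unoriented (`none`) or oriented (`some (u, v)`, an arc from `u` to `v`),
the orientation is compatible with the endpoints, and there are no digons
(two parallel edges oriented in opposite directions). -/
structure MixedOrientation (G : Multigraph V E) where
  orient : E → Option (V × V)
  compat : ∀ e a b, orient e = some (a, b) → G.ends e = s(a, b)
  noDigon : ∀ e f a b, G.ends e = G.ends f → orient e = some (a, b) → orient f ≠ some (b, a)

/-- The underlying graph of `G`, viewed as the mixed multigraph with no oriented edges. -/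
def Multigraph.triv (G : Multigraph V E) : MixedOrientation G where
  orient := fun _ => none
  compat := fun _ _ _ h => by simp at h
  noDigon := fun _ _ _ _ _ h => by simp at h

variable [DecidableEq V]

/-- The contribution of edge `e`, traversed from `u` to `v`, to the Hermitian adjacency
matrix entry `N_{uv}` and to walk weights: `1` if `e` is unoriented, `ω` if `e` is an arc
from `u` to `v`, and `conj ω` if `e` is an arc from `v` to `u`. -/
def stepWeight {G : Multigraph V E} (M : MixedOrientation G) (e : E) (u v : V) : ℂ :=
  match M.orient e with
  | none => 1
  | some (a, _) => if a = u then omega6 else (starRingEnd ℂ) omega6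

/-- The Hermitian adjacency matrix `N(M)` of a mixed multigraph:
`N_{uv} = e{u,v} + e(u,v)·ω + e(v,u)·conj ω`. -/
def herm [Fintype V] [Fintype E] {G : Multigraph V E} (M : MixedOrientation G) :
    Matrix V V ℂ :=
  Matrix.of fun u v => ∑ e : E, if G.ends e = s(u, v) then stepWeight M e u v else 0

/-- A (mixed) cycle in the multigraph `G`: a cyclic sequence of `n ≥ 2` distinct vertices
joined by `n` distinct edges. -/
structure MixedCycle (G : Multigraph V E) where
  n : ℕ
  two_le : 2 ≤ n
  vert : ZMod n → V
  edge : ZMod n → E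
  vert_inj : Function.Injective vert
  edge_inj : Function.Injective edge
  ends_eq : ∀ i, G.ends (edge i) = s(vert i, vert (i + 1))

/-- The weight `wt(C) = ω^f · (conj ω)^b` of a mixed cycle `C` in `M`, traversed in
the direction given by its parametrization. -/
def cycleWeight {G : Multigraph V E} (M : MixedOrientation G) (C : MixedCycle G) : ℂ :=
  haveI : NeZero C.n := ⟨by have := C.two_le; omega⟩
  ∏ i : ZMod C.n, stepWeight M (C.edge i) (C.vert i) (C.vert (i + 1))

/-- The value `ν(C) = wt(C) + conj (wt(C))` of a mixed cycle. -/
def nu {G : Multigraph V E} (M : MixedOrientation G) (C : MixedCycle G) : ℂ :=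
  cycleWeight M C + (starRingEnd ℂ) (cycleWeight M C)

/-- The number of forward arcs of a mixed cycle (relative to its direction). -/
def fCount {G : Multigraph V E} (M : MixedOrientation G) (C : MixedCycle G) : ℕ :=
  haveI : NeZero C.n := ⟨by have := C.two_le; omega⟩
  (Finset.univ.filter fun i : ZMod C.n =>
    M.orient (C.edge i) = some (C.vert i, C.vert (i + 1))).card

/-- The number of backward arcs of a mixed cycle (relative to its direction). -/
def bCount {G : Multigraph V E} (M : MixedOrientation G) (C : MixedCycle G) : ℕ :=
  haveI : NeZero C.n := ⟨by have := C.two_le; omega⟩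
  (Finset.univ.filter fun i : ZMod C.n =>
    M.orient (C.edge i) = some (C.vert (i + 1), C.vert i)).card

/-- The edge set of a mixed cycle. -/
def cycleEdges [DecidableEq E] {G : Multigraph V E} (C : MixedCycle G) : Finset E :=
  haveI : NeZero C.n := ⟨by have := C.two_le; omega⟩
  Finset.image C.edge Finset.univ

/-- Reachability in `G` using only edges from the set `S`. -/
def ReachIn (G : Multigraph V E) (S : Set E) (u v : V) : Prop :=
  Relation.ReflTransGen (fun x y => ∃ e ∈ S, G.ends e = s(x, y)) u v

/-- A multigraph is connected if every two vertices are joined by a walk. -/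
def Multigraph.Connected (G : Multigraph V E) : Prop :=
  ∀ u v : V, ReachIn G Set.univ u v

/-- All entries of the diagonal `d` are sixth roots of unity `ω^i`, `0 ≤ i ≤ 5`. -/
def IsSixthRoots (d : V → ℂ) : Prop := ∀ v, ∃ i : ℕ, i ≤ 5 ∧ d v = omega6 ^ i

/-- `M''` is obtained from `M'` by a three-way switching: `N(M'') = D⁻¹ N(M') D` for
some diagonal matrix `D` whose diagonal entries are sixth roots of unity. -/
def Switching [Fintype V] [Fintype E] {G : Multigraph V E}
    (M' M'' : MixedOrientation G) : Prop :=
  ∃ d : V → ℂ, IsSixthRoots d ∧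
    herm M'' = (Matrix.diagonal d)⁻¹ * herm M' * Matrix.diagonal d

/-- `M'` is the converse of `M`: every arc of `M` is reversed. -/
def IsConverse {G : Multigraph V E} (M M' : MixedOrientation G) : Prop :=
  ∀ e, M'.orient e = Option.map Prod.swap (M.orient e)

/-- `M'` and `M''` are switching equivalent: one is obtained from the other by a
three-way switching and/or taking a converse. -/
def SwitchEquiv [Fintype V] [Fintype E] {G : Multigraph V E}
    (M' M'' : MixedOrientation G) : Prop :=
  Switching M' M'' ∨ ∃ Mc : MixedOrientation G, IsConverse M' Mc ∧ Switching Mc M''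

/-- `T` is (the edge set of) a spanning tree of `G`: it connects all vertices and
contains no cycle. -/
def IsSpanningTree (G : Multigraph V E) (T : Set E) : Prop :=
  (∀ u v : V, ReachIn G T u v) ∧ ∀ C : MixedCycle G, ¬ (∀ i, C.edge i ∈ T)

/-- `C` is a fundamental cycle with respect to the spanning tree `T`: it uses exactly
one non-tree edge. -/
def IsFundamentalCycle (G : Multigraph V E) (T : Set E) (C : MixedCycle G) : Prop :=
  ∃ e, e ∉ T ∧ ∀ i, C.edge i = e ∨ C.edge i ∈ T

theorem Matrix.charpoly_diagonal_inv_mul_mul_diagonal {n K : Type*} [Fintype n] [DecidableEq n]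
    [Field K] (A : Matrix n n K) {d : n → K} (hd : ∀ i, d i ≠ 0) :
    (Matrix.diagonal d⁻¹ * A * Matrix.diagonal d).charpoly = A.charpoly := by
  rw [Matrix.charpoly_mul_comm, ← mul_assoc, Matrix.diagonal_mul_diagonal]
  simp [hd]

lemma normSq_omega6 : normSq omega6 = 1 := by
  simp only [omega6, normSq_mk]
  nlinarith [Real.mul_self_sqrt (show (0 : ℝ) ≤ 3 by norm_num)]

lemma conj_omega6 : (starRingEnd ℂ) omega6 = omega6⁻¹ := by
  simp [inv_def, normSq_omega6]

lemma omega6_ne_zero : omega6 ≠ 0 :=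
  fun h => by simpa [h] using normSq_omega6

section Orientation

variable {G : Multigraph V E} (M : MixedOrientation G)

lemma stepWeight_ne_zero (e : E) (u v : V) : stepWeight M e u v ≠ 0 := by
  unfold stepWeight
  split
  · exact one_ne_zero
  · split_ifs <;> simp [conj_omega6, omega6_ne_zero]

lemma stepWeight_swap {e : E} {u v : V} (hend : G.ends e = s(u, v)) (huv : u ≠ v) :
    stepWeight M e v u = (stepWeight M e u v)⁻¹ := by
  unfold stepWeight
  rcases ho : M.orient e with _ | ⟨a, b⟩
  · simp
  · rcases Sym2.eq_iff.mp ((M.compat e a b ho).symm.trans hend) with ⟨rfl, -⟩ | ⟨rfl, -⟩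
    · simp [huv, conj_omega6]
    · simp [huv.symm, conj_omega6]

lemma stepWeight_congr {M' : MixedOrientation G} {e : E} (h : M.orient e = M'.orient e)
    (u v : V) : stepWeight M e u v = stepWeight M' e u v := by
  unfold stepWeight
  rw [h]

end Orientation

section Reach

omit [DecidableEq V]

variable {G : Multigraph V E} {S : Set E}

lemma ReachIn.symm {u v : V} (h : ReachIn G S u v) : ReachIn G S v u := by
  have : Std.Symm fun x y : V => ∃ e ∈ S, G.ends e = s(x, y) :=
    ⟨fun x y ⟨e, he, hxy⟩ => ⟨e, he, hxy.trans Sym2.eq_swap⟩⟩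
  exact Relation.ReflTransGen.stdSymm.symm _ _ h

lemma reachIn_iff_of_ends_eq {e : E} (he : e ∈ S) {x y : V} (hxy : G.ends e = s(x, y))
    (w : V) : ReachIn G S w x ↔ ReachIn G S w y :=
  ⟨fun h => h.tail ⟨e, he, hxy⟩, fun h => h.tail ⟨e, he, hxy.trans Sym2.eq_swap⟩⟩

end Reach

lemma herm_eq_diagonal_inv_mul_mul_diagonal [Fintype V] [Fintype E] {G : Multigraph V E}
    (M M' : MixedOrientation G) (d : V → ℂ)
    (h : ∀ e x y, G.ends e = s(x, y) → stepWeight M' e x y = (d x)⁻¹ * stepWeight M e x y * d y) :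
    herm M' = Matrix.diagonal d⁻¹ * herm M * Matrix.diagonal d := by
  ext x y
  simp only [herm, Matrix.diagonal_mul, Matrix.mul_diagonal, Matrix.of_apply, Pi.inv_apply,
    Finset.mul_sum, Finset.sum_mul]
  refine Finset.sum_congr rfl fun e _ => ?_
  split_ifs with he
  · exact h e x y he
  · simp

/-- changing the orientation status of a bridge does not change the spectrum. -/
theorem bridge_spectrum_invariant [Fintype V] [Fintype E] {G : Multigraph V E}
    (e₀ : E)
    (hbridge : ∀ u v : V, G.ends e₀ = s(u, v) → ¬ ReachIn G {e : E | e ≠ e₀} u v)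
    (M M' : MixedOrientation G)
    (hsame : ∀ e : E, e ≠ e₀ → M.orient e = M'.orient e) :
    (herm M).charpoly = (herm M').charpoly := by
  classical
  obtain ⟨u, v, huv⟩ : ∃ u v, G.ends e₀ = s(u, v) := Sym2.exists.mp ⟨_, rfl⟩
  have hne : u ≠ v := fun h => G.loopless e₀ (by simp [huv, h])
  -- Rescaling the side of `v` in `G - e₀` is a diagonal similarity that touches only `e₀`.
  let d : V → ℂ := fun x =>
    if ReachIn G {e | e ≠ e₀} v x then (stepWeight M e₀ u v)⁻¹ * stepWeight M' e₀ u v else 1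
  have hd : ∀ x, d x ≠ 0 := fun x => by
    unfold d; split_ifs <;> simp [stepWeight_ne_zero]
  have hdu : d u = 1 := if_neg fun h => hbridge u v huv h.symm
  have hdv : d v = (stepWeight M e₀ u v)⁻¹ * stepWeight M' e₀ u v := if_pos .refl
  rw [herm_eq_diagonal_inv_mul_mul_diagonal M M' d ?_,
    Matrix.charpoly_diagonal_inv_mul_mul_diagonal _ hd]
  intro e x y hxy
  by_cases he : e = e₀
  · subst he
    rcases Sym2.eq_iff.mp (hxy.symm.trans huv) with ⟨rfl, rfl⟩ | ⟨rfl, rfl⟩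
    · rw [hdu, hdv]
      field_simp [stepWeight_ne_zero M]
    · rw [stepWeight_swap M' huv hne, stepWeight_swap M huv hne, hdu, hdv]
      field_simp [stepWeight_ne_zero M, stepWeight_ne_zero M']
  · have hdxy : d x = d y := by
      simp only [d, reachIn_iff_of_ends_eq (S := {e | e ≠ e₀}) he hxy]
    rw [hdxy, stepWeight_congr M (hsame e he)]
    field_simp [hd y]
end
end

section
/- All mixed forests with the same underlying graph are cospectral: if M and M' are mixed multigraphs whose common underlying multigraph is a forest, then N(M) and N(M') have the same spectrum. -/
open Complex Finset

noncomputable section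

variable {V E : Type}

variable [DecidableEq V]

/-!
Expand `det (X - N)` over permutations `σ`. A term vanishes unless every vertex moved by `σ`
is moved to a neighbour. In a forest such a `σ` is an involution, since a longer orbit would
trace a cycle, so it swaps the endpoints of disjoint edges, and each swapped edge `uv` contributes
`N_{uv} N_{vu} = |N_{uv}|² = 1` whatever its orientation; parallel edges, which would change this
value, form a 2-cycle and are excluded as well.
-/

lemma omega6_mul_conj : omega6 * (starRingEnd ℂ) omega6 = 1 := by
  have h3 : Real.sqrt 3 ^ 2 = 3 := Real.sq_sqrt (by norm_num)
  rw [Complex.mul_conj, omega6, Complex.normSq_mk]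
  norm_cast
  nlinarith [h3]

namespace Multigraph

def Adj (G : Multigraph V E) (u v : V) : Prop := ∃ e, G.ends e = s(u, v)

variable {G : Multigraph V E}

omit [DecidableEq V] in
lemma ne_of_ends_eq {e : E} {u v : V} (he : G.ends e = s(u, v)) : u ≠ v := fun h =>
  G.loopless e (by rw [he, h]; exact Sym2.mk_isDiag_iff.mpr rfl)

omit [DecidableEq V] in
lemma Adj.symm {u v : V} (h : G.Adj u v) : G.Adj v u :=
  h.imp fun _ he => he.trans Sym2.eq_swap

omit [DecidableEq V] in
lemma ends_injective (hforest : IsEmpty (MixedCycle G)) : Function.Injective G.ends := by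
  intro e f hef
  by_contra hne
  obtain ⟨⟨u, v⟩, huv⟩ := Quot.exists_rep (G.ends e)
  have hne' : u ≠ v := ne_of_ends_eq huv.symm
  refine hforest.false ⟨2, le_rfl, ![u, v], ![e, f], ?_, ?_, ?_⟩
  · intro i j
    fin_cases i <;> fin_cases j <;> simp [hne', hne'.symm] <;> rfl
  · intro i j
    fin_cases i <;> fin_cases j <;> simp [hne, Ne.symm hne] <;> rfl
  · intro i
    fin_cases i
    · exact huv.symm
    · exact (hef ▸ huv.symm).trans Sym2.eq_swap

omit [DecidableEq V] in
lemma nonempty_mixedCycle_of_adj {n : ℕ} (hn : 3 ≤ n) {vert : ZMod n → V}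
    (hinj : Function.Injective vert) (hadj : ∀ i, G.Adj (vert i) (vert (i + 1))) :
    Nonempty (MixedCycle G) := by
  choose edge hedge using hadj
  refine ⟨⟨n, by omega, vert, edge, hinj, fun i j hij => ?_, hedge⟩⟩
  have hends := hedge i
  rw [hij, hedge j] at hends
  rcases Sym2.eq_iff.mp hends with ⟨h, -⟩ | ⟨h₁, h₂⟩
  · exact (hinj h).symm
  · have h2 : ((2 : ℕ) : ZMod n) = 0 := by
      push_cast
      linear_combination hinj h₂ - hinj h₁
    have := Nat.le_of_dvd two_pos ((ZMod.natCast_eq_zero_iff 2 n).mp h2)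
    omega

omit [DecidableEq V] in
lemma involutive_of_forall_eq_or_adj [Finite V] (hforest : IsEmpty (MixedCycle G))
    {σ : Equiv.Perm V} (hσ : ∀ v, σ v = v ∨ G.Adj (σ v) v) : Function.Involutive σ := by
  intro v
  by_contra h
  set n := Function.minimalPeriod σ v
  have hn : 3 ≤ n := by
    have hpos := Function.minimalPeriod_pos_of_mem_periodicPts (σ.injective.mem_periodicPts v)
    have hdvd : ¬ n ∣ 2 := fun hdvd => h (Function.isPeriodicPt_iff_minimalPeriod_dvd.mpr hdvd)
    have h1 : n ≠ 1 := fun h1 => hdvd (h1 ▸ one_dvd 2)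
    have h2 : n ≠ 2 := fun h2 => hdvd (h2 ▸ dvd_rfl)
    omega
  have : NeZero n := ⟨by omega⟩
  have : Fact (1 < n) := ⟨by omega⟩
  let vert : ZMod n → V := fun i => σ^[i.val] v
  have hinj : Function.Injective vert := fun i j hij =>
    ZMod.val_injective n <| Function.iterate_injOn_Iio_minimalPeriod
      (Set.mem_Iio.2 (ZMod.val_lt i)) (Set.mem_Iio.2 (ZMod.val_lt j)) hij
  have hsucc (i : ZMod n) : vert (i + 1) = σ (vert i) := by
    simp only [vert, ZMod.val_add, ZMod.val_one]
    rw [Function.iterate_mod_minimalPeriod_eq, Function.iterate_succ_apply']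
  refine hforest.false (nonempty_mixedCycle_of_adj hn hinj fun i => ?_).some
  rw [hsucc]
  refine ((hσ (vert i)).resolve_left fun hfix => ?_).symm
  exact one_ne_zero (by simpa using hinj ((hsucc i).trans hfix) : (1 : ZMod n) = 0)

end Multigraph

variable {G : Multigraph V E}

lemma stepWeight_mul_stepWeight_swap (M : MixedOrientation G) {e : E} {u v : V}
    (he : G.ends e = s(u, v)) : stepWeight M e u v * stepWeight M e v u = 1 := by
  have huv := G.ne_of_ends_eq he
  unfold stepWeight
  cases horient : M.orient e with
  | none => simp
  | some p =>
    obtain ⟨a, b⟩ := p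
    rcases Sym2.eq_iff.mp ((M.compat e a b horient).symm.trans he) with ⟨rfl, -⟩ | ⟨rfl, -⟩
    · simp [huv, omega6_mul_conj]
    · simp [huv.symm, mul_comm, omega6_mul_conj]

section herm

variable [Fintype V] [Fintype E]

lemma herm_apply_self (M : MixedOrientation G) (v : V) : herm M v v = 0 :=
  Finset.sum_eq_zero fun _ _ => if_neg fun h => G.ne_of_ends_eq h rfl

lemma herm_apply_of_not_adj (M : MixedOrientation G) {u v : V} (h : ¬ G.Adj u v) :
    herm M u v = 0 :=
  Finset.sum_eq_zero fun e _ => if_neg fun he => h ⟨e, he⟩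

lemma herm_apply_of_ends (hforest : IsEmpty (MixedCycle G)) (M : MixedOrientation G) {e : E}
    {u v : V} (he : G.ends e = s(u, v)) : herm M u v = stepWeight M e u v := by
  rw [herm, Matrix.of_apply, Finset.sum_eq_single e (fun f _ hfe => ?_) (by simp), if_pos he]
  exact if_neg fun hf => hfe (G.ends_injective hforest (hf.trans he.symm))

lemma herm_mul_herm_swap (hforest : IsEmpty (MixedCycle G)) (M : MixedOrientation G) {u v : V}
    (h : G.Adj u v) : herm M u v * herm M v u = 1 := by
  obtain ⟨e, he⟩ := h
  rw [herm_apply_of_ends hforest M he, herm_apply_of_ends hforest M (he.trans Sym2.eq_swap)]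
  exact stepWeight_mul_stepWeight_swap M he

open Polynomial in
lemma prod_charmatrix_herm_of_adj (hforest : IsEmpty (MixedCycle G)) (M : MixedOrientation G)
    {σ : Equiv.Perm V} (hσ : ∀ v, σ v = v ∨ G.Adj (σ v) v) :
    ∏ v, (herm M).charmatrix (σ v) v = ∏ v, if σ v = v then (X : ℂ[X]) else -1 := by
  let g : V → ℂ := fun v => if σ v = v then 1 else herm M (σ v) v
  have hentry (v : V) :
      (herm M).charmatrix (σ v) v = (if σ v = v then X else -1) * C (g v) := by
    by_cases hv : σ v = v
    · simp [g, hv, Matrix.charmatrix_apply_eq, herm_apply_self]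
    · simp [g, hv]
  have hinv := G.involutive_of_forall_eq_or_adj hforest hσ
  have hg : ∏ v, g v = 1 := by
    refine Finset.prod_ninvolution σ (fun v => ?_) (fun v hv hfix => hv (by simp [g, hfix]))
      (fun _ => Finset.mem_univ _) hinv
    by_cases hv : σ v = v
    · simp [g, hv]
    · have hv' : σ (σ v) ≠ σ v := by rwa [hinv, ne_comm]
      simp only [g, if_neg hv, if_neg hv', hinv v]
      exact herm_mul_herm_swap hforest M ((hσ v).resolve_left hv)
  rw [Finset.prod_congr rfl fun v _ => hentry v, Finset.prod_mul_distrib, ← map_prod, hg, map_one,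
    mul_one]

end herm

/-- all mixed forests with the same underlying graph are cospectral. -/
theorem forest_cospectral [Fintype V] [Fintype E] {G : Multigraph V E}
    (hforest : IsEmpty (MixedCycle G)) (M M' : MixedOrientation G) :
    (herm M).charpoly = (herm M').charpoly := by
  simp only [Matrix.charpoly, Matrix.det_apply]
  refine Finset.sum_congr rfl fun σ _ => congrArg _ ?_
  by_cases hσ : ∀ v, σ v = v ∨ G.Adj (σ v) v
  · rw [prod_charmatrix_herm_of_adj hforest M hσ, prod_charmatrix_herm_of_adj hforest M' hσ]
  · push Not at hσ
    obtain ⟨v, hmoved, hnadj⟩ := hσ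
    have hzero (N : MixedOrientation G) : ∏ i, (herm N).charmatrix (σ i) i = 0 :=
      Finset.prod_eq_zero (Finset.mem_univ v) <| by
        rw [Matrix.charmatrix_apply_ne _ _ _ hmoved, herm_apply_of_not_adj N hnadj, map_zero,
          neg_zero]
    rw [hzero M, hzero M']

end
end

section
/- Let G be a connected k-cyclic undirected multigraph with k ≥ 1 (i.e., |E(G)| - |V(G)| + 1 = k). Then the number n_c(G) of cospectral classes of mixed multigraphs with underlying graph G satisfies n_c(G) ≤ n_s(G) ≤ 6^k/2 + 2^{k-1}, where n_s(G) is the number of switching equivalence classes in 𝓜(G). -/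
open Complex Finset

noncomputable section

variable {V E : Type}

variable [DecidableEq V]

/-!
Write the entries of `N(M)` as `ω ^ j` with `j : ZMod 6`. A switching by `diag (ω ^ c)`
changes the exponents of the edges by the coboundary of `c`, and the converse negates them.
Along a spanning tree `T` every exponent pattern is a coboundary, so each `M` can be
normalized to have exponent `0` on `T`; it is then determined up to switching by its `k`
exponents on the edges outside `T`, and up to switching equivalence by that vector up to sign.
There are `(6 ^ k + 2 ^ k) / 2` such vectors up to sign. Switching is a conjugation and the
converse is a transposition, so both preserve the spectrum, whence `n_c ≤ n_s`.
-/

lemma omega6_sq : omega6 ^ 2 = omega6 - 1 := by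
  have h3 : Real.sqrt 3 * Real.sqrt 3 = 3 := Real.mul_self_sqrt (by norm_num)
  apply Complex.ext <;> simp [omega6, pow_two] <;> nlinarith [h3]

lemma omega6_pow_three : omega6 ^ 3 = -1 := by
  linear_combination (omega6 + 1) * omega6_sq

lemma omega6_pow_six : omega6 ^ 6 = 1 := by
  rw [show 6 = 3 * 2 from rfl, pow_mul, omega6_pow_three]
  norm_num

lemma omega6_pow_five : omega6 ^ 5 = (starRingEnd ℂ) omega6 := by
  have hconj : (starRingEnd ℂ) omega6 = 1 - omega6 := by
    apply Complex.ext <;> simp [omega6]; norm_num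
  rw [hconj]
  linear_combination omega6 ^ 2 * omega6_pow_three - omega6_sq

def omegaPow (j : ZMod 6) : ℂ := omega6 ^ j.val

lemma omegaPow_add (i j : ZMod 6) : omegaPow (i + j) = omegaPow i * omegaPow j := by
  rw [omegaPow, omegaPow, omegaPow, ZMod.val_add, ← pow_eq_pow_mod _ omega6_pow_six, pow_add]

lemma omegaPow_zero : omegaPow 0 = 1 := pow_zero _

omit [DecidableEq V] in
lemma isSixthRoots_omegaPow (c : V → ZMod 6) : IsSixthRoots (omegaPow ∘ c) :=
  fun v => ⟨(c v).val, Nat.le_of_lt_succ (ZMod.val_lt (c v)), rfl⟩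

instance MixedOrientation.finite {G : Multigraph V E} [Finite V] [Finite E] :
    Finite (MixedOrientation G) :=
  Finite.of_injective MixedOrientation.orient fun M M' h => by cases M; cases M'; congr

omit [DecidableEq V] in
lemma Multigraph.ne_of_ends_eq_s18 {G : Multigraph V E} {e : E} {u v : V} (h : G.ends e = s(u, v)) :
    u ≠ v := by
  simpa [h] using G.loopless e

omit [DecidableEq V] in
lemma MixedOrientation.ends_eq_of_orient {G : Multigraph V E} (M : MixedOrientation G) {e : E}
    {u v a b : V} (h : G.ends e = s(u, v)) (hM : M.orient e = some (a, b)) :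
    (a = u ∧ b = v) ∨ (a = v ∧ b = u) :=
  Sym2.eq_iff.mp ((M.compat e a b hM).symm.trans h)

def MixedOrientation.converse {G : Multigraph V E} (M : MixedOrientation G) :
    MixedOrientation G where
  orient e := (M.orient e).map Prod.swap
  compat e a b h := by
    simp only [Option.map_eq_some_iff, Prod.exists, Prod.swap_prod_mk, Prod.mk.injEq] at h
    obtain ⟨x, y, hM, rfl, rfl⟩ := h
    rw [M.compat e x y hM, Sym2.eq_swap]
  noDigon e f a b hef he hf := by
    simp only [Option.map_eq_some_iff, Prod.exists, Prod.swap_prod_mk, Prod.mk.injEq] at he hf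
    obtain ⟨x, y, hMe, rfl, rfl⟩ := he
    obtain ⟨x', y', hMf, rfl, rfl⟩ := hf
    exact M.noDigon f e _ _ hef.symm hMf hMe

omit [DecidableEq V] in
lemma MixedOrientation.isConverse_converse {G : Multigraph V E} (M : MixedOrientation G) :
    IsConverse M M.converse := fun _ => rfl

def stepIdx {G : Multigraph V E} (M : MixedOrientation G) (e : E) (u : V) : ZMod 6 :=
  match M.orient e with
  | none => 0
  | some (a, _) => if a = u then 1 else -1

section StepIdx

variable {G : Multigraph V E} {M : MixedOrientation G} {e : E} {u v : V}

lemma stepWeight_eq_omegaPow (M : MixedOrientation G) (e : E) (u v : V) :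
    stepWeight M e u v = omegaPow (stepIdx M e u) := by
  unfold stepWeight stepIdx
  rcases M.orient e with _ | ⟨a, b⟩
  · exact omegaPow_zero.symm
  · by_cases ha : a = u
    · simp [ha, omegaPow, show (1 : ZMod 6).val = 1 from rfl]
    · simp [ha, omegaPow, show (-1 : ZMod 6).val = 5 from rfl, omega6_pow_five]

lemma stepIdx_swap (h : G.ends e = s(u, v)) : stepIdx M e v = -stepIdx M e u := by
  have huv := G.ne_of_ends_eq_s18 h
  unfold stepIdx
  rcases hM : M.orient e with _ | ⟨a, b⟩
  · simp
  · rcases M.ends_eq_of_orient h hM with ⟨rfl, rfl⟩ | ⟨rfl, rfl⟩ <;> simp [huv, huv.symm]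

lemma stepIdx_converse (h : G.ends e = s(u, v)) : stepIdx M.converse e u = stepIdx M e v := by
  have huv := G.ne_of_ends_eq_s18 h
  unfold stepIdx
  rcases hM : M.orient e with _ | ⟨a, b⟩
  · simp [MixedOrientation.converse, hM]
  · simp only [MixedOrientation.converse, hM, Option.map_some, Prod.swap_prod_mk]
    rcases M.ends_eq_of_orient h hM with ⟨rfl, rfl⟩ | ⟨rfl, rfl⟩ <;> simp [huv, huv.symm]

end StepIdx

section Herm

variable [Fintype V] [Fintype E] {G : Multigraph V E}

lemma herm_apply (M : MixedOrientation G) (u v : V) :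
    herm M u v = ∑ e : E, if G.ends e = s(u, v) then omegaPow (stepIdx M e u) else 0 := by
  simp only [herm, Matrix.of_apply, stepWeight_eq_omegaPow]

lemma herm_converse (M : MixedOrientation G) : herm M.converse = (herm M).transpose := by
  ext u v
  rw [Matrix.transpose_apply, herm_apply, herm_apply]
  refine Finset.sum_congr rfl fun e _ => ?_
  by_cases h : G.ends e = s(u, v)
  · rw [if_pos h, if_pos (h.trans Sym2.eq_swap), stepIdx_converse h]
  · rw [if_neg h, if_neg fun h' => h (h'.trans Sym2.eq_swap)]

lemma inv_diagonal_omegaPow (c : V → ZMod 6) :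
    (Matrix.diagonal (omegaPow ∘ c))⁻¹ = Matrix.diagonal (omegaPow ∘ (-c)) := by
  refine Matrix.inv_eq_left_inv ?_
  simp [Matrix.diagonal_mul_diagonal, ← omegaPow_add, omegaPow_zero]

lemma switching_of_stepIdx {M' M'' : MixedOrientation G} (c : V → ZMod 6)
    (h : ∀ e u v, G.ends e = s(u, v) → stepIdx M'' e u = stepIdx M' e u - (c u - c v)) :
    Switching M' M'' := by
  refine ⟨omegaPow ∘ c, isSixthRoots_omegaPow c, ?_⟩
  ext u v
  rw [inv_diagonal_omegaPow, Matrix.mul_diagonal, Matrix.diagonal_mul, herm_apply, herm_apply,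
    Finset.mul_sum, Finset.sum_mul]
  refine Finset.sum_congr rfl fun e _ => ?_
  split_ifs with he
  · rw [h e u v he, Function.comp_apply, Function.comp_apply, Pi.neg_apply, ← omegaPow_add,
      ← omegaPow_add]
    ring_nf
  · simp

lemma charpoly_herm_eq_of_switching {M' M'' : MixedOrientation G} (h : Switching M' M'') :
    (herm M'').charpoly = (herm M').charpoly := by
  obtain ⟨d, hd, hM⟩ := h
  have hunit : IsUnit (Matrix.diagonal d) := by
    refine Matrix.isUnit_diagonal.mpr (Pi.isUnit_iff.mpr fun v => ?_)
    obtain ⟨i, -, hi⟩ := hd v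
    exact hi ▸ (pow_ne_zero i omega6_ne_zero).isUnit
  rw [hM, ← hunit.unit_spec, Matrix.charpoly_units_conj']

lemma charpoly_herm_eq_of_switchEquiv {M M' : MixedOrientation G} (h : SwitchEquiv M M') :
    (herm M).charpoly = (herm M').charpoly := by
  rcases h with h | ⟨Mc, hc, h⟩
  · exact (charpoly_herm_eq_of_switching h).symm
  · have hMc : Mc = M.converse := by
      cases Mc; congr; exact funext hc
    subst hMc
    rw [charpoly_herm_eq_of_switching h, herm_converse, Matrix.charpoly_transpose]

end Herm

/-- `(G.ends e).out` serves as an arbitrary but fixed reference orientation of `e`. -/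
def Multigraph.coboundary (G : Multigraph V E) {Γ : Type*} [AddCommGroup Γ] :
    (V → Γ) →+ (E → Γ) where
  toFun p e := p (G.ends e).out.1 - p (G.ends e).out.2
  map_zero' := by ext; simp
  map_add' p q := by ext; simp only [Pi.add_apply]; abel

omit [DecidableEq V] in
lemma Multigraph.out_eq_or_swap (G : Multigraph V E) {e : E} {u v : V}
    (h : G.ends e = s(u, v)) : (G.ends e).out = (u, v) ∨ (G.ends e).out = (v, u) := by
  have hout : s((G.ends e).out.1, (G.ends e).out.2) = s(u, v) := (Quot.out_eq _).trans h
  rcases Sym2.eq_iff.mp hout with ⟨h1, h2⟩ | ⟨h1, h2⟩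
  · exact Or.inl (Prod.ext h1 h2)
  · exact Or.inr (Prod.ext h1 h2)

def edgeIdx {G : Multigraph V E} (M : MixedOrientation G) (e : E) : ZMod 6 :=
  stepIdx M e (G.ends e).out.1

lemma edgeIdx_converse {G : Multigraph V E} (M : MixedOrientation G) :
    edgeIdx M.converse = -edgeIdx M := by
  ext e
  have hends : G.ends e = s((G.ends e).out.1, (G.ends e).out.2) := (Quot.out_eq _).symm
  rw [edgeIdx, stepIdx_converse hends, stepIdx_swap hends, Pi.neg_apply, edgeIdx]

section Switching

variable [Fintype V] [Fintype E] {G : Multigraph V E} {M' M'' : MixedOrientation G}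

lemma switching_of_edgeIdx (c : V → ZMod 6) (h : edgeIdx M'' = edgeIdx M' - G.coboundary c) :
    Switching M' M'' := by
  refine switching_of_stepIdx c fun e u v he => ?_
  have hcob : G.coboundary c e = c (G.ends e).out.1 - c (G.ends e).out.2 := rfl
  have he' := congrFun h e
  simp only [edgeIdx, Pi.sub_apply, hcob] at he'
  rcases G.out_eq_or_swap he with hout | hout <;> rw [hout] at he'
  · exact he'
  · have hvu : G.ends e = s(v, u) := he.trans Sym2.eq_swap
    rw [stepIdx_swap hvu, stepIdx_swap hvu, he']
    abel

lemma switchEquiv_of_edgeIdx (c : V → ZMod 6) (h : edgeIdx M'' = edgeIdx M' - G.coboundary c) :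
    SwitchEquiv M' M'' :=
  Or.inl (switching_of_edgeIdx c h)

lemma switchEquiv_of_edgeIdx_neg (c : V → ZMod 6)
    (h : edgeIdx M'' = -edgeIdx M' - G.coboundary c) : SwitchEquiv M' M'' :=
  Or.inr ⟨M'.converse, M'.isConverse_converse,
    switching_of_edgeIdx c (by rw [edgeIdx_converse]; exact h)⟩

end Switching

def Multigraph.HasPotentials (G : Multigraph V E) (Γ : Type*) [AddCommGroup Γ] (T : Finset E) :
    Prop :=
  ∀ w : E → Γ, ∃ p : V → Γ, ∀ e ∈ T, w e = G.coboundary p e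

section Potentials

variable {G : Multigraph V E} {Γ : Type*} [AddCommGroup Γ]

lemma Multigraph.HasPotentials.insert [DecidableEq E] {T : Finset E}
    (hT : G.HasPotentials Γ T) {e : E} {x y : V} (he : G.ends e = s(x, y))
    (hy : ∀ f ∈ T, y ∉ G.ends f) : G.HasPotentials Γ (insert e T) := by
  have hxy := G.ne_of_ends_eq_s18 he
  have hcob : ∀ (q : V → Γ) f, G.coboundary q f = q (G.ends f).out.1 - q (G.ends f).out.2 :=
    fun _ _ => rfl
  intro w
  obtain ⟨p, hp⟩ := hT w
  obtain ⟨a, ha⟩ : ∃ a : Γ, w e = G.coboundary (Function.update p y a) e := by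
    rcases G.out_eq_or_swap he with hout | hout
    · refine ⟨p x - w e, ?_⟩
      rw [hcob, hout, Function.update_of_ne hxy, Function.update_self]
      abel
    · refine ⟨w e + p x, ?_⟩
      rw [hcob, hout, Function.update_self, Function.update_of_ne hxy]
      abel
  refine ⟨Function.update p y a, fun f hf => ?_⟩
  rcases Finset.mem_insert.mp hf with rfl | hf
  · exact ha
  · have hne : ∀ v ∈ G.ends f, v ≠ y := fun v hv hvy => hy f hf (hvy ▸ hv)
    rw [hp f hf, hcob, hcob, Function.update_of_ne (hne _ (Sym2.out_fst_mem _)),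
      Function.update_of_ne (hne _ (Sym2.out_snd_mem _))]

omit [DecidableEq V] in
lemma Multigraph.exists_crossing_edge {A : Set E} {S : Set V} {u v : V} (h : ReachIn G A u v)
    (hu : u ∈ S) (hv : v ∉ S) : ∃ e ∈ A, ∃ x ∈ S, ∃ y ∉ S, G.ends e = s(x, y) := by
  induction h with
  | refl => exact absurd hu hv
  | @tail b c _ hbc ih =>
    by_cases hb : b ∈ S
    · obtain ⟨e, heA, he⟩ := hbc
      exact ⟨e, heA, b, hb, c, hv, he⟩
    · exact ih hb

/-- `T` is a tree on `S`; it grows by one pendant edge at a time until `S` is everything. -/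
lemma Multigraph.Connected.exists_hasPotentials_of_tree [Fintype V] [DecidableEq E]
    (hconn : G.Connected) (Γ : Type*) [AddCommGroup Γ] (S : Finset V) (T : Finset E)
    (hS : S.Nonempty) (hTS : ∀ e ∈ T, ∀ v ∈ G.ends e, v ∈ S) (hT : G.HasPotentials Γ T)
    (hcard : T.card + 1 = S.card) :
    ∃ T' : Finset E, T'.card + 1 = Fintype.card V ∧ G.HasPotentials Γ T' := by
  by_cases hSu : S = Finset.univ
  · exact ⟨T, by rw [hcard, hSu, Finset.card_univ], hT⟩
  obtain ⟨v, hv⟩ : ∃ v, v ∉ S := by simpa [Finset.eq_univ_iff_forall] using hSu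
  obtain ⟨r, hr⟩ := hS
  obtain ⟨e, -, x, hx, y, hy, he⟩ := G.exists_crossing_edge (S := S) (hconn r v) hr hv
  have hyT : ∀ f ∈ T, y ∉ G.ends f := fun f hf hyf => hy (hTS f hf y hyf)
  have heT : e ∉ T := fun heT => hyT e heT (he ▸ Sym2.mem_mk_right x y)
  refine hconn.exists_hasPotentials_of_tree Γ (insert y S) (insert e T)
    (Finset.insert_nonempty y S) (fun f hf w hw => ?_) (hT.insert he hyT) ?_
  · rcases Finset.mem_insert.mp hf with rfl | hf
    · rw [he, Sym2.mem_iff] at hw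
      rcases hw with rfl | rfl
      · exact Finset.mem_insert_of_mem hx
      · exact Finset.mem_insert_self w S
    · exact Finset.mem_insert_of_mem (hTS f hf w hw)
  · rw [Finset.card_insert_of_notMem heT, Finset.card_insert_of_notMem hy, hcard]
termination_by Fintype.card V - S.card
decreasing_by
  have := Finset.card_le_univ (insert y S)
  rw [Finset.card_insert_of_notMem hy] at this ⊢
  omega

lemma Multigraph.Connected.exists_hasPotentials [Fintype V] [DecidableEq E]
    (hconn : G.Connected) (Γ : Type*) [AddCommGroup Γ] :
    ∃ T : Finset E, Fintype.card V ≤ T.card + 1 ∧ G.HasPotentials Γ T := by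
  rcases isEmpty_or_nonempty V with hV | ⟨⟨r⟩⟩
  · exact ⟨∅, by simp, fun _ => ⟨0, by simp⟩⟩
  · obtain ⟨T, hTcard, hT⟩ := hconn.exists_hasPotentials_of_tree Γ {r} ∅
      (Finset.singleton_nonempty r) (by simp) (fun _ => ⟨0, by simp⟩) (by simp)
    exact ⟨T, hTcard.ge, hT⟩

end Potentials

section Counting

variable {A : Type*} [AddGroup A] [Fintype A] [DecidableEq A]

/-- `S ∩ -S` consists of fixed points of negation, so `|S| + |-S| ≤ |A| + |Fix(-)|`. -/
lemma two_mul_card_le_of_neg_mem {S : Finset A} (hS : ∀ x ∈ S, -x ∈ S → -x = x) :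
    2 * S.card ≤ Fintype.card A + Fintype.card {x : A // -x = x} := by
  have hneg : (S.image Neg.neg).card = S.card := Finset.card_image_of_injective _ neg_injective
  have hinter : (S ∩ S.image Neg.neg).card ≤ Fintype.card {x : A // -x = x} := by
    rw [Fintype.card_subtype]
    refine Finset.card_le_card fun x hx => ?_
    simp only [Finset.mem_inter, Finset.mem_image] at hx
    obtain ⟨hxS, y, hyS, rfl⟩ := hx
    simp [hS y hyS hxS]
  have hunion := Finset.card_union_add_card_inter S (S.image Neg.neg)
  have huniv := Finset.card_le_univ (S ∪ S.image Neg.neg)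
  omega

lemma two_mul_natCard_quot_le {α : Type*} [Finite α] {r : α → α → Prop} (f : α → A)
    (hf : ∀ a b, f a = f b ∨ f a = -f b → r a b) :
    2 * Nat.card (Quot r) ≤ Fintype.card A + Fintype.card {x : A // -x = x} := by
  have : Fintype (Quot r) := Fintype.ofFinite _
  have hg : ∀ q q' : Quot r, f q.out = f q'.out ∨ f q.out = -f q'.out → q = q' :=
    fun q q' h => by rw [← Quot.out_eq q, ← Quot.out_eq q']; exact Quot.sound (hf _ _ h)
  have hinj : Function.Injective fun q : Quot r => f q.out := fun q q' h => hg q q' (Or.inl h)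
  rw [Nat.card_eq_fintype_card, ← Finset.card_univ, ← Finset.card_image_of_injective _ hinj]
  refine two_mul_card_le_of_neg_mem fun x hx hnx => ?_
  obtain ⟨q, -, rfl⟩ := Finset.mem_image.mp hx
  obtain ⟨q', -, hq'⟩ := Finset.mem_image.mp hnx
  rw [hg q' q (Or.inr hq')] at hq'
  exact hq'.symm

end Counting

lemma card_neg_fixed_zmod_six_fun (ι : Type*) [Fintype ι] [DecidableEq ι] :
    Fintype.card {f : ι → ZMod 6 // -f = f} = 2 ^ Fintype.card ι := by
  have e : {f : ι → ZMod 6 // -f = f} ≃ (ι → {a : ZMod 6 // -a = a}) :=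
    (Equiv.subtypeEquivRight fun f : ι → ZMod 6 =>
      show -f = f ↔ ∀ i, -f i = f i from funext_iff).trans
        (Equiv.subtypePiEquivPi (p := fun _ a => -a = a))
  rw [Fintype.card_congr e, Fintype.card_fun]
  rfl

/-- Normalizing each mixed multigraph to vanish on `T` leaves one exponent per edge outside
`T`; two normalizations that agree or are opposite give switching-equivalent multigraphs. -/
lemma two_mul_card_switchEquiv_le [Fintype V] [Fintype E] [DecidableEq E] {G : Multigraph V E}
    {T : Finset E} (hT : G.HasPotentials (ZMod 6) T) :
    2 * Nat.card (Quot fun M M' : MixedOrientation G => SwitchEquiv M M') ≤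
      6 ^ (Fintype.card E - T.card) + 2 ^ (Fintype.card E - T.card) := by
  choose p hp using fun M : MixedOrientation G => hT (edgeIdx M)
  set red : MixedOrientation G → E → ZMod 6 := fun M => edgeIdx M - G.coboundary (p M)
  have hred : ∀ M, ∀ e ∈ T, red M e = 0 := fun M e he => by simp [red, hp M e he]
  have hext : ∀ {x y : E → ZMod 6}, (∀ e ∈ T, x e = 0) → (∀ e ∈ T, y e = 0) →
      (fun e : ↥Tᶜ => x e) = (fun e : ↥Tᶜ => y e) → x = y := by
    intro x y hx hy hxy
    ext e
    by_cases he : e ∈ T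
    · rw [hx e he, hy e he]
    · exact congrFun hxy ⟨e, Finset.mem_compl.mpr he⟩
  have hcount := two_mul_natCard_quot_le (r := fun M M' : MixedOrientation G => SwitchEquiv M M')
    (fun M (e : ↥Tᶜ) => red M e) fun M M' h => by
      rcases h with h | h
      · have h' := hext (hred M) (hred M') h
        refine switchEquiv_of_edgeIdx (p M - p M') ?_
        simp only [red] at h'
        rw [map_sub]
        linear_combination (exp := 1) -h'
      · have h' := hext (y := -red M') (hred M) (fun e he => by simp [hred M' e he]) h
        refine switchEquiv_of_edgeIdx_neg (-p M - p M') ?_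
        simp only [red] at h'
        rw [map_sub, map_neg]
        linear_combination (exp := 1) h'
  rwa [Fintype.card_fun, card_neg_fixed_zmod_six_fun, Fintype.card_coe, Finset.card_compl,
    ZMod.card] at hcount

lemma le_six_pow_div_two_add_two_pow {N r k : ℕ} (hN : 2 * N ≤ 6 ^ r + 2 ^ r) (hrk : r ≤ k) :
    N ≤ 6 ^ k / 2 + 2 ^ (k - 1) := by
  have h6 : 6 ^ r ≤ 6 ^ k := Nat.pow_le_pow_right (by norm_num) hrk
  have h2 : 2 ^ r ≤ 2 ^ k := Nat.pow_le_pow_right (by norm_num) hrk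
  rcases k with _ | k
  · simp only [pow_zero] at h6 h2 ⊢
    omega
  · rw [pow_succ] at h6 h2
    rw [pow_succ, Nat.add_sub_cancel]
    omega

theorem number_of_classes_bound_general [Fintype V] [Fintype E] {G : Multigraph V E}
    (hconn : G.Connected) (k : ℕ)
    (hcyclic : Fintype.card E + 1 = Fintype.card V + k) :
    Nat.card (Quot (fun M M' : MixedOrientation G =>
        (herm M).charpoly = (herm M').charpoly)) ≤
      Nat.card (Quot (fun M M' : MixedOrientation G => SwitchEquiv M M')) ∧
    Nat.card (Quot (fun M M' : MixedOrientation G => SwitchEquiv M M')) ≤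
      6 ^ k / 2 + 2 ^ (k - 1) := by
  classical
  refine ⟨Nat.card_le_card_of_surjective
    (Quot.mapRight fun _ _ => charpoly_herm_eq_of_switchEquiv)
    (Quot.ind fun M => ⟨Quot.mk _ M, rfl⟩), ?_⟩
  obtain ⟨T, hTcard, hT⟩ := hconn.exists_hasPotentials (ZMod 6)
  refine le_six_pow_div_two_add_two_pow (two_mul_card_switchEquiv_le hT) ?_
  omega

/-- Theorem mai00: for a connected `k`-cyclic multigraph `G` (`k ≥ 1`),
the number of cospectral classes is at most the number of switching equivalence classes,
which is at most `6^k/2 + 2^(k-1)`. -/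
theorem number_of_classes_bound [Fintype V] [Fintype E] {G : Multigraph V E}
    (hconn : G.Connected) (k : ℕ) (hk : 1 ≤ k)
    (hcyclic : Fintype.card E + 1 = Fintype.card V + k) :
    Nat.card (Quot (fun M M' : MixedOrientation G =>
        (herm M).charpoly = (herm M').charpoly)) ≤
      Nat.card (Quot (fun M M' : MixedOrientation G => SwitchEquiv M M')) ∧
    Nat.card (Quot (fun M M' : MixedOrientation G => SwitchEquiv M M')) ≤
      6 ^ k / 2 + 2 ^ (k - 1) :=
  number_of_classes_bound_general hconn k hcyclic

end
end
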